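/- arXiv:1903.07078 — 2 statements merged into one kernel-verified Lean document; each statement's English description precedes it below -/
import Mathlib

section
/- Let H and K be complex Hilbert spaces, U : H ⊗ K → H ⊗ K a unitary operator, μ ∈ K a fixed unit vector, and O a self-adjoint (or just linear) operator on H. Suppose ψ₁, ψ₂ ∈ H are such that U(ψ₁ ⊗ μ) = ψ₁' ⊗ μ₁' and U(ψ₂ ⊗ μ) = ψ₂' ⊗ μ₂', where ψ₁' and ψ₂' are eigenvectors of O for distinct eigenvalues and μ₁', μ₂' are nonzero. Then for all nonzero complex numbers α₁, α₂, the vector U((α₁ψ₁ + α₂ψ₂) ⊗ μ) is not of the form ψ'' ⊗ μ'' with ψ'' an eigenvector of O. -/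
/-!
By linearity of `U`, a product `ψ'' ⊗ μ''` in the image would satisfy
`ψ'' ⊗ μ'' = α₁ ψ₁' ⊗ μ₁' + α₂ ψ₂' ⊗ μ₂'`. Pairing the second factor with `y ∈ K` gives
`⟪y, μ''⟫ ψ'' = α₁ ⟪y, μ₁'⟫ ψ₁' + α₂ ⟪y, μ₂'⟫ ψ₂'` in `H`. The left side lies in the eigenspace of
`ψ''`, and eigenspaces for distinct eigenvalues are independent, so a nonzero summand on the right
forces its eigenvalue to be that of `ψ''`. Taking `y = μ₁'` and then `y = μ₂'` makes both `λ₁` and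
`λ₂` equal to it.
-/

open scoped ComplexInnerProductSpace

namespace Module.End

variable {𝕜 V : Type*} [Field 𝕜] [AddCommGroup V] [Module 𝕜 V]

theorem eq_of_add_mem_eigenspace {f : End 𝕜 V} {a b c : 𝕜} {x y : V}
    (hx : x ∈ f.eigenspace a) (hy : y ∈ f.eigenspace b) (hab : a ≠ b)
    (hxy : x + y ∈ f.eigenspace c) (hx0 : x ≠ 0) : a = c := by
  rw [mem_eigenspace_iff] at hx hy hxy
  have hsplit : (a - c) • x = (c - b) • y := by
    rw [map_add, hx, hy] at hxy
    linear_combination (norm := module) hxy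
  have hzero : (a - c) • x = 0 := by
    refine Submodule.disjoint_def.mp (f.disjoint_genEigenspace hab 1 1) _ ?_ ?_
    · exact Submodule.smul_mem _ _ (mem_eigenspace_iff.mpr hx)
    · rw [hsplit]; exact Submodule.smul_mem _ _ (mem_eigenspace_iff.mpr hy)
  exact sub_eq_zero.mp ((smul_eq_zero.mp hzero).resolve_right hx0)

end Module.End

open Module.End

section TensorSlice

variable {H K HK : Type*}
    [NormedAddCommGroup H] [InnerProductSpace ℂ H]
    [NormedAddCommGroup K] [InnerProductSpace ℂ K]
    [NormedAddCommGroup HK] [InnerProductSpace ℂ HK]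

theorem inner_smul_eq_of_tmul_eq_add (tmul : H →ₗ[ℂ] K →ₗ[ℂ] HK)
    (htmul : ∀ (a c : H) (b d : K), ⟪tmul a b, tmul c d⟫ = ⟪a, c⟫ * ⟪b, d⟫)
    {e a₁ a₂ : H} {f b₁ b₂ : K} (h : tmul e f = tmul a₁ b₁ + tmul a₂ b₂) (y : K) :
    ⟪y, f⟫ • e = ⟪y, b₁⟫ • a₁ + ⟪y, b₂⟫ • a₂ := by
  refine ext_inner_left ℂ fun x => ?_
  have := congrArg (⟪tmul x y, ·⟫) h
  simp only [inner_add_right, htmul] at this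
  simp only [inner_add_right, inner_smul_right]
  linear_combination this

theorem eq_of_tmul_eq_add_of_mem_eigenspace (tmul : H →ₗ[ℂ] K →ₗ[ℂ] HK)
    (htmul : ∀ (a c : H) (b d : K), ⟪tmul a b, tmul c d⟫ = ⟪a, c⟫ * ⟪b, d⟫)
    {O : H →ₗ[ℂ] H} {lam₁ lam₂ lam : ℂ} {e a₁ a₂ : H} {f b₁ b₂ : K}
    (h : tmul e f = tmul a₁ b₁ + tmul a₂ b₂) (he : e ∈ eigenspace O lam)
    (ha₁ : a₁ ∈ eigenspace O lam₁) (ha₂ : a₂ ∈ eigenspace O lam₂) (hlam : lam₁ ≠ lam₂)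
    (ha₁0 : a₁ ≠ 0) (hb₁0 : b₁ ≠ 0) : lam₁ = lam := by
  have hslice := inner_smul_eq_of_tmul_eq_add tmul htmul h b₁
  refine eq_of_add_mem_eigenspace (Submodule.smul_mem _ ⟪b₁, b₁⟫ ha₁)
    (Submodule.smul_mem _ ⟪b₁, b₂⟫ ha₂) hlam ?_ (smul_ne_zero (inner_self_ne_zero.mpr hb₁0) ha₁0)
  rw [← hslice]
  exact Submodule.smul_mem _ _ he

end TensorSlice

theorem stmt_0_general
    {H K HK : Type*}
    [NormedAddCommGroup H] [InnerProductSpace ℂ H]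
    [NormedAddCommGroup K] [InnerProductSpace ℂ K]
    [NormedAddCommGroup HK] [InnerProductSpace ℂ HK]
    (tmul : H →ₗ[ℂ] K →ₗ[ℂ] HK)
    (htmul : ∀ (a c : H) (b d : K), ⟪tmul a b, tmul c d⟫ = ⟪a, c⟫ * ⟪b, d⟫)
    (U : HK ≃ₗᵢ[ℂ] HK)
    (O : H →ₗ[ℂ] H)
    (μ : K)
    (ψ₁ ψ₂ ψ₁' ψ₂' : H) (μ₁' μ₂' : K) (lam₁ lam₂ : ℂ)
    (hψ₁' : ψ₁' ≠ 0) (hψ₂' : ψ₂' ≠ 0)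
    (hO₁ : O ψ₁' = lam₁ • ψ₁') (hO₂ : O ψ₂' = lam₂ • ψ₂') (hlam : lam₁ ≠ lam₂)
    (hμ₁' : μ₁' ≠ 0) (hμ₂' : μ₂' ≠ 0)
    (hU₁ : U (tmul ψ₁ μ) = tmul ψ₁' μ₁')
    (hU₂ : U (tmul ψ₂ μ) = tmul ψ₂' μ₂')
    (α₁ α₂ : ℂ) (hα₁ : α₁ ≠ 0) (hα₂ : α₂ ≠ 0) :
    ¬ ∃ (ψ'' : H) (μ'' : K) (lam : ℂ), ψ'' ≠ 0 ∧ O ψ'' = lam • ψ'' ∧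
        U (tmul (α₁ • ψ₁ + α₂ • ψ₂) μ) = tmul ψ'' μ'' := by
  rintro ⟨ψ'', μ'', lam, -, hOψ'', hUeq⟩
  have hsum : tmul ψ'' μ'' = tmul (α₁ • ψ₁') μ₁' + tmul (α₂ • ψ₂') μ₂' := by
    rw [← hUeq, map_add, map_smul, map_smul, LinearMap.add_apply, LinearMap.smul_apply,
      LinearMap.smul_apply, map_add, map_smul, map_smul, hU₁, hU₂, LinearMap.map_smul₂,
      LinearMap.map_smul₂]
  have he := mem_eigenspace_iff.mpr hOψ''
  have h₁ : α₁ • ψ₁' ∈ eigenspace O lam₁ :=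
    Submodule.smul_mem _ _ (mem_eigenspace_iff.mpr hO₁)
  have h₂ : α₂ • ψ₂' ∈ eigenspace O lam₂ :=
    Submodule.smul_mem _ _ (mem_eigenspace_iff.mpr hO₂)
  have hlam₁ := eq_of_tmul_eq_add_of_mem_eigenspace tmul htmul hsum he h₁ h₂ hlam
    (smul_ne_zero hα₁ hψ₁') hμ₁'
  have hlam₂ := eq_of_tmul_eq_add_of_mem_eigenspace tmul htmul (hsum.trans (add_comm _ _)) he
    h₂ h₁ hlam.symm (smul_ne_zero hα₂ hψ₂') hμ₂'
  exact hlam (hlam₁.trans hlam₂.symm)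

/-- Theorem 2 of the paper ("unitary_ic"). The Hilbert tensor product `H ⊗ K` is modeled
abstractly as a Hilbert space `HK` together with a bilinear map `tmul` satisfying the
characteristic inner-product identity `⟪a ⊗ b, c ⊗ d⟫ = ⟪a, c⟫ ⟪b, d⟫`. -/
theorem stmt_0
    {H K HK : Type*}
    [NormedAddCommGroup H] [InnerProductSpace ℂ H] [CompleteSpace H]
    [NormedAddCommGroup K] [InnerProductSpace ℂ K] [CompleteSpace K]
    [NormedAddCommGroup HK] [InnerProductSpace ℂ HK] [CompleteSpace HK]
    (tmul : H →ₗ[ℂ] K →ₗ[ℂ] HK)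
    (htmul : ∀ (a c : H) (b d : K), ⟪tmul a b, tmul c d⟫ = ⟪a, c⟫ * ⟪b, d⟫)
    (U : HK ≃ₗᵢ[ℂ] HK)
    (O : H →ₗ[ℂ] H)
    (μ : K) (hμ : ‖μ‖ = 1)
    (ψ₁ ψ₂ ψ₁' ψ₂' : H) (μ₁' μ₂' : K) (lam₁ lam₂ : ℂ)
    (hψ₁' : ψ₁' ≠ 0) (hψ₂' : ψ₂' ≠ 0)
    (hO₁ : O ψ₁' = lam₁ • ψ₁') (hO₂ : O ψ₂' = lam₂ • ψ₂') (hlam : lam₁ ≠ lam₂)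
    (hμ₁' : μ₁' ≠ 0) (hμ₂' : μ₂' ≠ 0)
    (hU₁ : U (tmul ψ₁ μ) = tmul ψ₁' μ₁')
    (hU₂ : U (tmul ψ₂ μ) = tmul ψ₂' μ₂')
    (α₁ α₂ : ℂ) (hα₁ : α₁ ≠ 0) (hα₂ : α₂ ≠ 0) :
    ¬ ∃ (ψ'' : H) (μ'' : K) (lam : ℂ), ψ'' ≠ 0 ∧ O ψ'' = lam • ψ'' ∧
        U (tmul (α₁ • ψ₁ + α₂ • ψ₂) μ) = tmul ψ'' μ'' :=
  stmt_0_general tmul htmul U O μ ψ₁ ψ₂ ψ₁' ψ₂' μ₁' μ₂' lam₁ lam₂ hψ₁' hψ₂' hO₁ hO₂ hlam hμ₁' hμ₂'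
    hU₁ hU₂ α₁ α₂ hα₁ hα₂
end

section
/- Let H₁, H₂ be complex Hilbert spaces, A' a bounded self-adjoint operator on H₁, A'' a bounded self-adjoint operator on H₂, and A = A' ⊗ 1 + 1 ⊗ A''. Suppose U is a unitary on H₁ ⊗ H₂ commuting with A, and suppose there are unit vectors j ∈ H₁, r ∈ H₂, r_j ∈ H₂ with U(j ⊗ r) = j ⊗ r_j. Then ⟨r, A'' r⟩ = ⟨r_j, A'' r_j⟩. -/
open scoped ComplexInnerProductSpace

/-- Eq. (22) of the paper: in the standard measurement scheme, with `A = A' ⊗ 1 + 1 ⊗ A''`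
conserved by the unitary `U` (i.e. `U` commutes with `A`), and `U (j ⊗ r) = j ⊗ r_j`,
the apparatus expectation value of `A''` is unchanged:
`⟪r, A'' r⟫ = ⟪r_j, A'' r_j⟫`. -/
theorem stmt_5
    {H₁ H₂ HK : Type*}
    [NormedAddCommGroup H₁] [InnerProductSpace ℂ H₁] [CompleteSpace H₁]
    [NormedAddCommGroup H₂] [InnerProductSpace ℂ H₂] [CompleteSpace H₂]
    [NormedAddCommGroup HK] [InnerProductSpace ℂ HK] [CompleteSpace HK]
    (tmul : H₁ →ₗ[ℂ] H₂ →ₗ[ℂ] HK)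
    (htmul : ∀ (a c : H₁) (b d : H₂), ⟪tmul a b, tmul c d⟫ = ⟪a, c⟫ * ⟪b, d⟫)
    (A' : H₁ →L[ℂ] H₁) (hA' : IsSelfAdjoint A')
    (A'' : H₂ →L[ℂ] H₂) (hA'' : IsSelfAdjoint A'')
    (A : HK →L[ℂ] HK)
    (hA : ∀ (a : H₁) (b : H₂), A (tmul a b) = tmul (A' a) b + tmul a (A'' b))
    (U : HK ≃ₗᵢ[ℂ] HK)
    (hcomm : ∀ x, U (A x) = A (U x))
    (j : H₁) (r r_j : H₂) (hj : ‖j‖ = 1) (hr : ‖r‖ = 1) (hrj : ‖r_j‖ = 1)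
    (hU : U (tmul j r) = tmul j r_j) :
    ⟪r, A'' r⟫ = ⟪r_j, A'' r_j⟫ := by
  have hjj : ⟪j, j⟫ = 1 := by
    rw [inner_self_eq_norm_sq_to_K, hj]; norm_num
  have hrr : ⟪r, r⟫ = 1 := by
    rw [inner_self_eq_norm_sq_to_K, hr]; norm_num
  have hrjrj : ⟪r_j, r_j⟫ = 1 := by
    rw [inner_self_eq_norm_sq_to_K, hrj]; norm_num
  have key : ⟪tmul j r, A (tmul j r)⟫ = ⟪tmul j r_j, A (tmul j r_j)⟫ := by
    calc ⟪tmul j r, A (tmul j r)⟫ = ⟪U (tmul j r), U (A (tmul j r))⟫ := by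
          rw [U.inner_map_map]
      _ = ⟪tmul j r_j, A (tmul j r_j)⟫ := by rw [hcomm, hU]
  rw [hA, hA, inner_add_right, inner_add_right, htmul, htmul, htmul, htmul,
    hjj, hrr, hrjrj] at key
  simpa using key
end
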